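/- The polynomial R(y) = Σ_{{S_1,…,S_n}} det(M^{1_{S_1},…,1_{S_n}})² · ∏_{∅≠P∉{S_1,…,S_n}} f_P(y) (sum over all collections of n distinct nonempty subsets S_1,…,S_n of {1,…,n}) is strictly positive at every point of the closure of Ω. -/

import Mathlib

/-- The hypotheses on the function `q`. -/
def qCond (q : ℕ → ℕ) : Prop :=
  q 0 = 1 ∧ (∀ a b, q a + q b < q (max a b + 1)) ∧ ∀ a, 3 * q a ≤ q (a + 1)

/-- The affine form `f_S(y) = −q(|S|) + Σ_{i∈S} y_i`. -/
def fS (n : ℕ) (q : ℕ → ℕ) (S : Finset (Fin n)) (y : Fin n → ℝ) : ℝ :=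
  -(q S.card : ℝ) + ∑ i ∈ S, y i

/-- The region `Ω = ∩_{∅≠S⊆{1,…,n}} {f_S > 0}`. -/
def Omega (n : ℕ) (q : ℕ → ℕ) : Set (Fin n → ℝ) :=
  {y | ∀ S : Finset (Fin n), S.Nonempty → 0 < fS n q S y}

/-- `det(M^{1_{S_1},…,1_{S_n}})²` : the square of the determinant of the matrix whose columns
are the indicator vectors of the members of the collection `𝒮` of `n` distinct subsets
of `{1,…,n}` (in any order; the square is order-independent). -/
noncomputable def detSqCols (n : ℕ) (𝒮 : Finset (Finset (Fin n))) : ℝ :=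
  if h : 𝒮.card = n then
    (Matrix.det (Matrix.of fun i j : Fin n =>
      if i ∈ ((𝒮.equivFin.symm (Fin.cast h.symm j)) : Finset (Fin n)) then (1:ℝ) else 0))^2
  else 0

/-- The polynomial `R(y) = Σ_{{S_1,…,S_n}} det(M^{1_{S_1},…,1_{S_n}})² ∏_{∅≠P∉{S_1,…,S_n}} f_P(y)`,
the sum being over all collections of `n` distinct nonempty subsets of `{1,…,n}`. -/
noncomputable def Rpoly (n : ℕ) (q : ℕ → ℕ) (y : Fin n → ℝ) : ℝ :=
  ∑ 𝒮 ∈ Finset.univ.filter (fun 𝒮 : Finset (Finset (Fin n)) => 𝒮.card = n ∧ ∅ ∉ 𝒮),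
    detSqCols n 𝒮 *
      ∏ P ∈ Finset.univ.filter (fun P : Finset (Fin n) => P.Nonempty ∧ P ∉ 𝒮), fS n q P y

/-! On the closure of `Ω` every `f_P` is nonnegative, so every term of `R` is nonnegative and it
suffices to exhibit one positive term. Call `P` tight at `y` if `f_P(y) = 0`. Tight sets form a
chain: if `S, T` are tight and incomparable, superadditivity of `q` gives
`q|S| + q|T| < q|S ∪ T| ≤ Σ_{S ∪ T} y ≤ Σ_S y + Σ_T y = q|S| + q|T|`. A chain of subsets of
`{1,…,n}` consists of initial segments of some ordering of `{1,…,n}`, i.e. lies in a complete flag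
`C_1 ⊂ ⋯ ⊂ C_n`. The indicator matrix of the flag is unitriangular up to a row permutation, so its
determinant is `±1`, and every `P` outside the flag is not tight, so `∏_{P ∉ flag} f_P(y) > 0`. -/

open Finset

lemma qCond.monotone {q : ℕ → ℕ} (hq : qCond q) : Monotone q :=
  monotone_nat_of_le_succ fun a => (Nat.le_mul_of_pos_left (q a) three_pos).trans (hq.2.2 a)

lemma IsChain.card_filter_notMem_lt {α : Type*} [DecidableEq α] {𝒯 : Finset (Finset α)}
    (h : IsChain (· ⊆ ·) (𝒯 : Set (Finset α))) {T : Finset α} (hT : T ∈ 𝒯) {i j : α}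
    (hi : i ∈ T) (hj : j ∉ T) : #{U ∈ 𝒯 | i ∉ U} < #{U ∈ 𝒯 | j ∉ U} := by
  have hsub : {U ∈ 𝒯 | i ∉ U} ⊆ {U ∈ 𝒯 | j ∉ U} := by
    intro U hU
    rw [mem_filter] at hU ⊢
    refine ⟨hU.1, fun hjU => ?_⟩
    rcases h.total hU.1 hT with hUT | hTU
    · exact hj (hUT hjU)
    · exact hU.2 (hTU hi)
  refine card_lt_card ((ssubset_iff_of_subset hsub).2 ⟨T, ?_, ?_⟩) <;> simp [hT, hi, hj]

theorem IsChain.exists_perm_mem_iff_lt_card {n : ℕ} {𝒯 : Finset (Finset (Fin n))}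
    (h : IsChain (· ⊆ ·) (𝒯 : Set (Finset (Fin n)))) :
    ∃ e : Equiv.Perm (Fin n), ∀ T ∈ 𝒯, ∀ i, i ∈ T ↔ (e i : ℕ) < T.card := by
  -- Points of `T ∈ 𝒯` are missed by fewer members of `𝒯` than points outside `T`, so sorting by
  -- this count makes every `T ∈ 𝒯` an initial segment.
  set key : Fin n → ℕ := fun i => #{U ∈ 𝒯 | i ∉ U}
  set σ := Tuple.sort key
  refine ⟨σ.symm, fun T hT i => ?_⟩
  have hlower : ∀ p p' : Fin n, p' ≤ p → σ p ∈ T → σ p' ∈ T := fun p p' hle hp => by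
    by_contra hp'
    exact (h.card_filter_notMem_lt hT hp hp').not_ge (Tuple.monotone_sort key hle)
  have hcard : #{p | σ p ∈ T} = T.card := by
    rw [← card_map σ.toEmbedding]
    congr 1
    ext i
    simp
  rw [← hcard, Fin.lt_card_filter_univ_iff_apply_of_imp _ hlower, Equiv.apply_symm_apply]

lemma Int.cast_units_sq {R : Type*} [Ring R] (u : ℤˣ) : ((u : ℤ) : R) ^ 2 = 1 := by
  rw [← Int.cast_pow, ← Units.val_pow_eq_pow_val, Int.units_sq, Units.val_one, Int.cast_one]

lemma detSqCols_nonneg (n : ℕ) (𝒮 : Finset (Finset (Fin n))) : 0 ≤ detSqCols n 𝒮 := by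
  unfold detSqCols
  split <;> positivity

lemma detSqCols_image {n : ℕ} {S : Fin n → Finset (Fin n)} (hS : Function.Injective S) :
    detSqCols n (univ.image S) =
      (Matrix.of fun i j : Fin n => if i ∈ S j then (1 : ℝ) else 0).det ^ 2 := by
  have hcard : #(univ.image S) = n := by rw [card_image_of_injective _ hS, card_fin]
  rw [detSqCols, dif_pos hcard]
  set T : Fin n → Finset (Fin n) :=
    fun j => ((univ.image S).equivFin.symm (Fin.cast hcard.symm j) : Finset (Fin n))
  have hT : Function.Injective T := fun j j' h => by
    simpa [T, Fin.ext_iff] using (univ.image S).equivFin.symm.injective (Subtype.ext h)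
  have hTS : ∀ j, ∃ k, S k = T j := fun j => by
    simpa only [mem_image, mem_univ, true_and] using
      ((univ.image S).equivFin.symm (Fin.cast hcard.symm j)).2
  choose τ hτ using hTS
  have hτinj : Function.Injective τ := fun j j' h => hT (by rw [← hτ, ← hτ, h])
  set π := Equiv.ofBijective τ (Finite.injective_iff_bijective.1 hτinj)
  have hsub : (Matrix.of fun i j : Fin n => if i ∈ T j then (1 : ℝ) else 0) =
      (Matrix.of fun i j : Fin n => if i ∈ S j then (1 : ℝ) else 0).submatrix id π := by
    ext i j
    simp [T, π, hτ]
  rw [hsub, Matrix.det_permute', mul_pow, Int.cast_units_sq, one_mul]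

def permFlag {n : ℕ} (e : Equiv.Perm (Fin n)) (k : Fin n) : Finset (Fin n) :=
  {i | e i ≤ k}

lemma card_permFlag {n : ℕ} (e : Equiv.Perm (Fin n)) (k : Fin n) :
    #(permFlag e k) = k + 1 := by
  rw [← Fin.card_Iic, ← card_map e.toEmbedding]
  congr 1
  ext i
  simp [permFlag]

lemma permFlag_nonempty {n : ℕ} (e : Equiv.Perm (Fin n)) (k : Fin n) : (permFlag e k).Nonempty :=
  ⟨e.symm k, by simp [permFlag]⟩

lemma permFlag_injective {n : ℕ} (e : Equiv.Perm (Fin n)) : Function.Injective (permFlag e) :=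
  fun k k' h => Fin.ext (by simpa [card_permFlag] using congrArg card h)

lemma mem_image_permFlag {n : ℕ} {e : Equiv.Perm (Fin n)} {T : Finset (Fin n)}
    (hT : T.Nonempty) (he : ∀ i, i ∈ T ↔ (e i : ℕ) < T.card) : T ∈ univ.image (permFlag e) := by
  have hpos := hT.card_pos
  have hle : T.card ≤ n := by simpa using card_le_univ T
  refine mem_image.2 ⟨⟨T.card - 1, by omega⟩, mem_univ _, ?_⟩
  ext i
  rw [he, permFlag, mem_filter, Fin.le_def]
  simp only [mem_univ, true_and]
  omega

lemma det_permFlag {n : ℕ} (e : Equiv.Perm (Fin n)) :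
    (Matrix.of fun i k : Fin n => if i ∈ permFlag e k then (1 : ℝ) else 0).det =
      Equiv.Perm.sign e := by
  have hsub : (Matrix.of fun i k : Fin n => if i ∈ permFlag e k then (1 : ℝ) else 0) =
      (Matrix.of fun i k : Fin n => if i ≤ k then (1 : ℝ) else 0).submatrix e id := by
    ext i k
    simp [permFlag]
  rw [hsub, Matrix.det_permute, Matrix.det_of_isUpperTriangular]
  · simp
  · intro i k hki
    exact if_neg (not_le.2 hki)

lemma detSqCols_image_permFlag {n : ℕ} (e : Equiv.Perm (Fin n)) :
    detSqCols n (univ.image (permFlag e)) = 1 := by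
  rw [detSqCols_image (permFlag_injective e), det_permFlag, Int.cast_units_sq]

lemma continuous_fS (n : ℕ) (q : ℕ → ℕ) (S : Finset (Fin n)) : Continuous (fS n q S) := by
  unfold fS
  fun_prop

noncomputable def tightSets (n : ℕ) (q : ℕ → ℕ) (y : Fin n → ℝ) : Finset (Finset (Fin n)) :=
  {S | S.Nonempty ∧ fS n q S y = 0}

section Tight

variable {n : ℕ} {q : ℕ → ℕ} {y : Fin n → ℝ}

lemma fS_nonneg_of_mem_closure (hy : y ∈ closure (Omega n q)) {S : Finset (Fin n)}
    (hS : S.Nonempty) : 0 ≤ fS n q S y :=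
  closure_minimal (fun _ hz => (hz S hS).le) (isClosed_le continuous_const (continuous_fS n q S)) hy

lemma apply_nonneg_of_fS_nonneg (h0 : ∀ S : Finset (Fin n), S.Nonempty → 0 ≤ fS n q S y)
    (i : Fin n) : 0 ≤ y i := by
  have h := h0 {i} (singleton_nonempty i)
  simp only [fS, card_singleton, sum_singleton] at h
  linarith [(Nat.cast_nonneg (q 1) : (0 : ℝ) ≤ q 1)]

lemma isChain_tightSets (hq : qCond q) (h0 : ∀ S : Finset (Fin n), S.Nonempty → 0 ≤ fS n q S y) :
    IsChain (· ⊆ ·) (tightSets n q y : Set (Finset (Fin n))) := by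
  intro S hS T hT _
  simp only [tightSets, coe_filter, mem_univ, true_and, Set.mem_ofPred_eq] at hS hT
  simp only [fS] at hS hT
  by_contra! hST
  have hS_lt : S.card < (S ∪ T).card :=
    card_lt_card ⟨subset_union_left, fun h => hST.2 (subset_union_right.trans h)⟩
  have hT_lt : T.card < (S ∪ T).card :=
    card_lt_card ⟨subset_union_right, fun h => hST.1 (subset_union_left.trans h)⟩
  have hunion := h0 (S ∪ T) (hS.1.mono subset_union_left)
  simp only [fS] at hunion
  have hinter : 0 ≤ ∑ i ∈ S ∩ T, y i := sum_nonneg fun i _ => apply_nonneg_of_fS_nonneg h0 i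
  refine lt_irrefl ((q S.card : ℝ) + q T.card) ?_
  calc (q S.card : ℝ) + q T.card < q (S ∪ T).card := by
        exact_mod_cast (hq.2.1 _ _).trans_le (hq.monotone (by omega))
    _ ≤ ∑ i ∈ S ∪ T, y i + ∑ i ∈ S ∩ T, y i := by linarith
    _ = ∑ i ∈ S, y i + ∑ i ∈ T, y i := sum_union_inter
    _ = q S.card + q T.card := by linarith [hS.2, hT.2]

lemma Rpoly_pos_of_tightSets_subset (h0 : ∀ S : Finset (Fin n), S.Nonempty → 0 ≤ fS n q S y)
    {𝒮 : Finset (Finset (Fin n))} (hcard : 𝒮.card = n) (hempty : ∅ ∉ 𝒮)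
    (hdet : 0 < detSqCols n 𝒮) (htight : tightSets n q y ⊆ 𝒮) : 0 < Rpoly n q y := by
  refine sum_pos' (fun 𝒯 _ => mul_nonneg (detSqCols_nonneg n 𝒯) ?_) ⟨𝒮, ?_, mul_pos hdet ?_⟩
  · exact prod_nonneg fun P hP => h0 P (mem_filter.1 hP).2.1
  · simp [hcard, hempty]
  · refine prod_pos fun P hP => ?_
    obtain ⟨-, hPne, hP𝒮⟩ := mem_filter.1 hP
    refine (h0 P hPne).lt_of_ne fun hP0 => hP𝒮 (htight ?_)
    simp [tightSets, hPne, hP0]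

end Tight

theorem Rpoly_pos_on_closure_Omega_general
    (n : ℕ) (q : ℕ → ℕ) (hq : qCond q)
    (y : Fin n → ℝ) (hy : y ∈ closure (Omega n q)) :
    0 < Rpoly n q y := by
  have h0 : ∀ S : Finset (Fin n), S.Nonempty → 0 ≤ fS n q S y :=
    fun S hS => fS_nonneg_of_mem_closure hy hS
  obtain ⟨e, he⟩ := (isChain_tightSets hq h0).exists_perm_mem_iff_lt_card
  refine Rpoly_pos_of_tightSets_subset h0 (𝒮 := univ.image (permFlag e)) ?_ ?_ ?_ ?_
  · rw [card_image_of_injective _ (permFlag_injective e), card_fin]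
  · intro hmem
    obtain ⟨k, -, hk⟩ := mem_image.1 hmem
    exact (permFlag_nonempty e k).ne_empty hk
  · rw [detSqCols_image_permFlag]
    exact one_pos
  · intro T hT
    exact mem_image_permFlag (mem_filter.1 hT).2.1 (he T hT)

theorem Rpoly_pos_on_closure_Omega
    (n : ℕ) (hn : 1 ≤ n) (q : ℕ → ℕ) (hq : qCond q)
    (y : Fin n → ℝ) (hy : y ∈ closure (Omega n q)) :
    0 < Rpoly n q y :=
  Rpoly_pos_on_closure_Omega_general n q hq y hy
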